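/- The normalized matrix of maximum in-forests J̃ = σ_{n−d}^{-1} Q_{n−d} annihilates the Laplacian on both sides: L J̃ = J̃ L = 0. -/

import Mathlib

open Matrix Finset Polynomial

/-- `A` is (the arc set of) an in-forest of the weighted digraph with arc-weight
matrix `W`: all arcs are loopless arcs of positive weight, every vertex has
outdegree at most one, and there are no directed cycles. -/
def IsInForest {n : ℕ} (W : Matrix (Fin n) (Fin n) ℝ)
    (A : Finset (Fin n × Fin n)) : Prop :=
  (∀ e ∈ A, e.1 ≠ e.2 ∧ 0 < W e.1 e.2) ∧
  (∀ i : Fin n, (A.filter (fun e => e.1 = i)).card ≤ 1) ∧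
  (∀ i : Fin n, ¬ Relation.TransGen (fun a b => (a, b) ∈ A) i i)

/-- The weight of a forest: the product of its arc weights. -/
def forestWeight {n : ℕ} (W : Matrix (Fin n) (Fin n) ℝ)
    (A : Finset (Fin n × Fin n)) : ℝ :=
  ∏ e ∈ A, W e.1 e.2

/-- `i` belongs to the tree of the forest `A` converging to (rooted at) `j`. -/
def InTreeRootedAt {n : ℕ} (A : Finset (Fin n × Fin n)) (i j : Fin n) : Prop :=
  Relation.ReflTransGen (fun a b => (a, b) ∈ A) i j ∧ ∀ e ∈ A, e.1 ≠ j

open scoped Classical in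
/-- `σ_k`: the total weight of in-forests with `k` arcs. -/
noncomputable def sigmaW {n : ℕ} (W : Matrix (Fin n) (Fin n) ℝ) (k : ℕ) : ℝ :=
  ∑ A ∈ Finset.univ.powerset.filter
      (fun A => IsInForest W A ∧ A.card = k), forestWeight W A

open scoped Classical in
/-- `Q_k`: the matrix of in-forests with `k` arcs; its `(i,j)` entry is the total
weight of in-forests with `k` arcs in which `i` belongs to a tree rooted at `j`. -/
noncomputable def forestMatrix {n : ℕ} (W : Matrix (Fin n) (Fin n) ℝ) (k : ℕ) :
    Matrix (Fin n) (Fin n) ℝ :=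
  Matrix.of fun i j =>
    ∑ A ∈ Finset.univ.powerset.filter
        (fun A => IsInForest W A ∧ A.card = k ∧ InTreeRootedAt A i j),
      forestWeight W A

open scoped Classical in
/-- `σ`: the total weight of all in-forests. -/
noncomputable def sigmaTot {n : ℕ} (W : Matrix (Fin n) (Fin n) ℝ) : ℝ :=
  ∑ A ∈ Finset.univ.powerset.filter (fun A => IsInForest W A), forestWeight W A

open scoped Classical in
/-- `Q`: the matrix of all in-forests. -/
noncomputable def forestMatrixTot {n : ℕ} (W : Matrix (Fin n) (Fin n) ℝ) :
    Matrix (Fin n) (Fin n) ℝ :=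
  Matrix.of fun i j =>
    ∑ A ∈ Finset.univ.powerset.filter
        (fun A => IsInForest W A ∧ InTreeRootedAt A i j), forestWeight W A

open scoped Classical in
/-- The number of arcs in a maximum in-forest (equal to `n - d` where `d` is the
in-forest dimension). -/
noncomputable def maxForestCard {n : ℕ} (W : Matrix (Fin n) (Fin n) ℝ) : ℕ :=
  (Finset.univ.powerset.filter (fun A => IsInForest W A)).sup Finset.card

/-- The in-forest dimension `d` of the digraph. -/
noncomputable def forestDim {n : ℕ} (W : Matrix (Fin n) (Fin n) ℝ) : ℕ :=
  n - maxForestCard W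

/-- The (row) Laplacian matrix of the weighted digraph with arc-weight matrix `W`. -/
def lap {n : ℕ} (W : Matrix (Fin n) (Fin n) ℝ) : Matrix (Fin n) (Fin n) ℝ :=
  Matrix.diagonal (fun i => ∑ j, W i j) - W

/-- `J̃`: the normalized matrix of maximum in-forests. -/
noncomputable def Jtilde {n : ℕ} (W : Matrix (Fin n) (Fin n) ℝ) :
    Matrix (Fin n) (Fin n) ℝ :=
  (sigmaW W (maxForestCard W))⁻¹ • forestMatrix W (maxForestCard W)

/-!
Entrywise, `(L Q) i j = ∑ c, W i c * (Q i j - Q c j)` is a signed sum over pairs `(c, F)` of an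
arc `i → c` and a maximum in-forest `F`, and only pairs with exactly one of `i`, `c` in the tree
of `F` rooted at `j` contribute. For such a pair maximality forces `i` to have a parent `t` in `F`
and `c` not to reach `i`, so rehanging `i` from `t` onto `c` yields a maximum in-forest `F'`.
The map `(c, F) ↦ (t, F')` is an involution with `W i c * w F = W i t * w F'` that exchanges the
tree memberships of `i` and `c`, hence reverses the sign: the sum vanishes.

For `Q L = 0` one needs `∑ t, W j t * Q i j = ∑ k, W k j * Q i k`. If `i` lies in the tree
of `F` rooted at `j` and `j → t` is an arc, maximality makes `t` reach `j`; adding `j → t` and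
deleting the last arc `u → j` of that path gives a maximum in-forest of the same weight in which
`i` lies in the tree rooted at `u`. Cutting `j` from its parent and adding `k → j` is the
inverse move.
-/

namespace Relation

variable {α : Type*} {r r' : α → α → Prop} {a b u x y : α}

theorem ReflTransGen.mono_avoiding (h : ∀ a b, a ≠ u → r a b → r' a b)
    (hxu : ¬ReflTransGen r x u) (hxy : ReflTransGen r x y) : ReflTransGen r' x y := by
  induction hxy using ReflTransGen.head_induction_on with
  | refl => exact .refl
  | head hac _ ih =>
    exact .head (h _ _ (fun ha => hxu (ha ▸ .refl)) hac) (ih fun hcu => hxu (.head hac hcu))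

theorem ReflTransGen.mono_upTo (h : ∀ a b, a ≠ u → r a b → r' a b)
    (hxu : ReflTransGen r x u) : ReflTransGen r' x u := by
  induction hxu using ReflTransGen.head_induction_on with
  | refl => exact .refl
  | @head a c hac _ ih =>
    by_cases ha : a = u
    · exact ha ▸ .refl
    · exact .head (h _ _ ha hac) ih

theorem ReflTransGen.sup_arc_cases (h : ReflTransGen (fun x y => r x y ∨ x = a ∧ y = b) x y) :
    ReflTransGen r x y ∨
      ReflTransGen r x a ∧ ReflTransGen (fun x y => r x y ∨ x = a ∧ y = b) b y := by
  induction h using ReflTransGen.head_induction_on with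
  | refl => exact .inl .refl
  | head hxc hcy ih =>
    rcases hxc with hxc | ⟨rfl, rfl⟩
    · exact ih.imp (.head hxc) fun ⟨hca, hby⟩ => ⟨.head hxc hca, hby⟩
    · exact .inr ⟨.refl, hcy⟩

theorem not_transGen_sup_arc (hr : ∀ v, ¬TransGen r v v) (hba : ¬ReflTransGen r b a) (v : α) :
    ¬TransGen (fun x y => r x y ∨ x = a ∧ y = b) v v := by
  have hba' : ¬ReflTransGen (fun x y => r x y ∨ x = a ∧ y = b) b a := fun h =>
    hba (h.mono_upTo fun _ _ hx hxy => hxy.resolve_right fun h => hx h.1)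
  intro hv
  obtain ⟨c, hvc, hcv⟩ := TransGen.head'_iff.mp hv
  rcases hvc with hvc | ⟨rfl, rfl⟩
  · rcases hcv.sup_arc_cases with hcv | ⟨hca, hbv⟩
    · exact hr v (.head' hvc hcv)
    · exact hba' (hbv.trans (.head (.inl hvc) (ReflTransGen.mono (fun _ _ => .inl) _ _ hca)))
  · exact hba' hcv

end Relation

open Relation

section SwapArc

variable {α : Type*} [DecidableEq α] {A : Finset α} {e f x : α}

def swapArc (A : Finset α) (e f : α) : Finset α := insert f (A.erase e)

theorem mem_swapArc : x ∈ swapArc A e f ↔ x = f ∨ x ≠ e ∧ x ∈ A := by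
  simp [swapArc]

theorem swapArc_swapArc (he : e ∈ A) (hf : f ∉ A.erase e) :
    swapArc (swapArc A e f) f e = A := by
  rw [swapArc, swapArc, Finset.erase_insert hf, Finset.insert_erase he]

theorem card_swapArc (he : e ∈ A) (hf : f ∉ A.erase e) : (swapArc A e f).card = A.card := by
  rw [swapArc, Finset.card_insert_of_notMem hf, Finset.card_erase_add_one he]

end SwapArc

variable {n : ℕ} {W : Matrix (Fin n) (Fin n) ℝ} {A : Finset (Fin n × Fin n)}
  {a b c i j k t u x : Fin n} {e : Fin n × Fin n}

abbrev arcRel (A : Finset (Fin n × Fin n)) (a b : Fin n) : Prop := (a, b) ∈ A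

theorem mul_forestWeight_swapArc (he : e ∈ A) (hf : (a, b) ∉ A.erase e) :
    W e.1 e.2 * forestWeight W (swapArc A e (a, b)) = W a b * forestWeight W A := by
  rw [forestWeight, forestWeight, swapArc, Finset.prod_insert hf,
    ← Finset.mul_prod_erase A (fun e => W e.1 e.2) he]
  ring

theorem eq_of_reflTransGen_of_root (ha : ∀ e ∈ A, e.1 ≠ a) (h : ReflTransGen (arcRel A) a x) :
    a = x := by
  rcases h.cases_head with rfl | ⟨c, hac, -⟩
  · rfl
  · exact absurd rfl (ha _ hac)

theorem root_erase_of_root (ha : ∀ e ∈ A, e.1 ≠ a) (f : Fin n × Fin n) :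
    ∀ e ∈ A.erase f, e.1 ≠ a :=
  fun e he => ha e (Finset.mem_of_mem_erase he)

theorem root_swapArc (ha : ∀ g ∈ A.erase e, g.1 ≠ x) (hb : b ≠ x) :
    ∀ g ∈ swapArc A e (b, c), g.1 ≠ x := by
  intro g hg
  rcases Finset.mem_insert.mp hg with rfl | hg
  · exact hb
  · exact ha g hg

namespace IsInForest

theorem mono {B : Finset (Fin n × Fin n)} (hA : IsInForest W A) (hBA : B ⊆ A) :
    IsInForest W B :=
  ⟨fun e he => hA.1 e (hBA he),
    fun i => (Finset.card_le_card (Finset.filter_subset_filter _ hBA)).trans (hA.2.1 i),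
    fun i hi => hA.2.2 i (TransGen.mono (fun _ _ h => hBA h) _ _ hi)⟩

theorem rightUnique (hA : IsInForest W A) : Relator.RightUnique (arcRel A) := by
  intro a b c hab hac
  have := Finset.card_le_one.mp (hA.2.1 a) _ (Finset.mem_filter.mpr ⟨hab, rfl⟩) _
    (Finset.mem_filter.mpr ⟨hac, rfl⟩)
  exact congrArg Prod.snd this

theorem not_reflTransGen_of_mem (hA : IsInForest W A) (hab : (a, b) ∈ A) :
    ¬ReflTransGen (arcRel A) b a :=
  fun h => hA.2.2 a (.head' hab h)

theorem root_erase (hA : IsInForest W A) (hab : (a, b) ∈ A) :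
    ∀ e ∈ A.erase (a, b), e.1 ≠ a := by
  rintro ⟨a', b'⟩ he rfl
  obtain rfl : b' = b := hA.rightUnique (Finset.mem_of_mem_erase he) hab
  exact Finset.notMem_erase _ _ he

theorem insert (hA : IsInForest W A) (ha : ∀ e ∈ A, e.1 ≠ a) (hab : a ≠ b) (hw : 0 < W a b)
    (hba : ¬ReflTransGen (arcRel A) b a) : IsInForest W (insert (a, b) A) := by
  refine ⟨?_, fun x => ?_, fun v hv => ?_⟩
  · intro e he
    rcases Finset.mem_insert.mp he with rfl | he
    · exact ⟨hab, hw⟩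
    · exact hA.1 e he
  · rw [Finset.filter_insert]
    split_ifs with hx
    · rw [Finset.filter_eq_empty_iff.mpr fun e he h => ha e he (h.trans hx.symm)]
      simp
    · exact hA.2.1 x
  · refine not_transGen_sup_arc hA.2.2 hba v (TransGen.mono (fun x y h => ?_) _ _ hv)
    simpa [Prod.ext_iff, or_comm] using h

theorem inTreeRootedAt_iff_of_reflTransGen (hA : IsInForest W A)
    (hci : ReflTransGen (arcRel A) c i) : InTreeRootedAt A c j ↔ InTreeRootedAt A i j := by
  refine ⟨fun ⟨hcj, hj⟩ => ⟨?_, hj⟩, fun ⟨hij, hj⟩ => ⟨hci.trans hij, hj⟩⟩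
  rcases ReflTransGen.total_of_right_unique hA.rightUnique hci hcj with hij | hji
  · exact hij
  · exact eq_of_reflTransGen_of_root hj hji ▸ .refl

theorem card_le_maxForestCard (hA : IsInForest W A) : A.card ≤ maxForestCard W := by
  classical
  exact Finset.le_sup
    (Finset.mem_filter.mpr ⟨Finset.mem_powerset.mpr (Finset.subset_univ A), hA⟩)

end IsInForest

def IsMaxInForest (W : Matrix (Fin n) (Fin n) ℝ) (A : Finset (Fin n × Fin n)) : Prop :=
  IsInForest W A ∧ A.card = maxForestCard W

namespace IsMaxInForest

theorem reflTransGen_of_root (hA : IsMaxInForest W A) (ha : ∀ e ∈ A, e.1 ≠ a) (hab : a ≠ b)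
    (hw : 0 < W a b) : ReflTransGen (arcRel A) b a := by
  by_contra hba
  have := (hA.1.insert ha hab hw hba).card_le_maxForestCard
  rw [Finset.card_insert_of_notMem fun h => ha _ h rfl, hA.2] at this
  omega

theorem swapArc_of_not_reflTransGen (hA : IsMaxInForest W A) (he : e ∈ A)
    (ha : ∀ g ∈ A.erase e, g.1 ≠ a) (hab : a ≠ b) (hw : 0 < W a b)
    (hba : ¬ReflTransGen (arcRel (A.erase e)) b a) :
    IsMaxInForest W (swapArc A e (a, b)) :=
  ⟨(hA.1.mono (A.erase_subset e)).insert ha hab hw hba,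
    (card_swapArc he fun h => ha _ h rfl).trans hA.2⟩

end IsMaxInForest

noncomputable def parent (A : Finset (Fin n × Fin n)) (a : Fin n) : Fin n :=
  if h : ∃ b, (a, b) ∈ A then h.choose else a

theorem parent_mem (h : (a, b) ∈ A) : (a, parent A a) ∈ A := by
  have h' : ∃ b, (a, b) ∈ A := ⟨b, h⟩
  rw [parent, dif_pos h']
  exact h'.choose_spec

theorem IsInForest.parent_eq (hA : IsInForest W A) (h : (a, b) ∈ A) : parent A a = b :=
  hA.rightUnique (parent_mem h) h

open scoped Classical in
noncomputable def predOnPath (A : Finset (Fin n × Fin n)) (t j : Fin n) : Fin n :=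
  if h : ∃ u, ReflTransGen (arcRel A) t u ∧ (u, j) ∈ A then h.choose else t

theorem IsInForest.eq_of_reflTransGen_of_mem {v : Fin n} (hA : IsInForest W A)
    (hj : ∀ e ∈ A, e.1 ≠ j) (huj : (u, j) ∈ A) (hvj : (v, j) ∈ A)
    (huv : ReflTransGen (arcRel A) u v) : u = v := by
  rcases huv.cases_head with rfl | ⟨c, huc, hcv⟩
  · rfl
  · obtain rfl : c = j := hA.rightUnique huc huj
    obtain rfl := eq_of_reflTransGen_of_root hj hcv
    exact absurd rfl (hj _ hvj)

theorem IsInForest.predOnPath_eq (hA : IsInForest W A) (hj : ∀ e ∈ A, e.1 ≠ j)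
    (htu : ReflTransGen (arcRel A) t u) (huj : (u, j) ∈ A) : predOnPath A t j = u := by
  have h : ∃ u, ReflTransGen (arcRel A) t u ∧ (u, j) ∈ A := ⟨u, htu, huj⟩
  rw [predOnPath, dif_pos h]
  obtain ⟨htv, hvj⟩ := h.choose_spec
  rcases ReflTransGen.total_of_right_unique hA.rightUnique htv htu with h | h
  · exact hA.eq_of_reflTransGen_of_mem hj hvj huj h
  · exact (hA.eq_of_reflTransGen_of_mem hj huj hvj h).symm

theorem inTreeRootedAt_iff_of_agree {B : Finset (Fin n × Fin n)}
    (hAB : ∀ x y, x ≠ u → ((x, y) ∈ A ↔ (x, y) ∈ B)) (huA : (u, a) ∈ A)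
    (huB : (u, b) ∈ B) (hxu : ¬ReflTransGen (arcRel A) x u) :
    InTreeRootedAt A x j ↔ InTreeRootedAt B x j := by
  have hxuB : ¬ReflTransGen (arcRel B) x u := fun h =>
    hxu (h.mono_upTo fun a b ha => (hAB a b ha).mpr)
  refine and_congr ⟨(·.mono_avoiding (fun a b ha => (hAB a b ha).mp) hxu),
    (·.mono_avoiding (fun a b ha => (hAB a b ha).mpr) hxuB)⟩ ?_
  by_cases hj : j = u
  · subst hj
    exact ⟨fun h => absurd rfl (h _ huA), fun h => absurd rfl (h _ huB)⟩
  · constructor <;> rintro h ⟨x, y⟩ he rfl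
    · exact h _ ((hAB x y hj).mpr he) rfl
    · exact h _ ((hAB x y hj).mp he) rfl

noncomputable def rehang (A : Finset (Fin n × Fin n)) (i c : Fin n) : Finset (Fin n × Fin n) :=
  swapArc A (i, parent A i) (i, c)

theorem mem_rehang_iff_of_ne (hx : x ≠ i) : (x, b) ∈ rehang A i c ↔ (x, b) ∈ A := by
  simp [rehang, mem_swapArc, hx]

theorem IsInForest.parent_rehang (hA' : IsInForest W (rehang A i c)) :
    parent (rehang A i c) i = c :=
  hA'.parent_eq (Finset.mem_insert_self _ _)

theorem IsInForest.rehang_rehang (hA : IsInForest W A) (hi : (i, parent A i) ∈ A)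
    (hA' : IsInForest W (rehang A i c)) : rehang (rehang A i c) i (parent A i) = A := by
  rw [rehang, hA'.parent_rehang]
  exact swapArc_swapArc hi fun h => hA.root_erase hi _ h rfl

theorem IsInForest.mul_forestWeight_rehang (hA : IsInForest W A) (hi : (i, parent A i) ∈ A) :
    W i (parent A i) * forestWeight W (rehang A i c) = W i c * forestWeight W A :=
  mul_forestWeight_swapArc hi fun h => hA.root_erase hi _ h rfl

theorem IsInForest.inTreeRootedAt_rehang_parent_iff (hA : IsInForest W A)
    (hi : (i, parent A i) ∈ A) :
    InTreeRootedAt (rehang A i c) (parent A i) j ↔ InTreeRootedAt A i j :=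
  (inTreeRootedAt_iff_of_agree (fun _ _ hx => (mem_rehang_iff_of_ne hx).symm) hi
    (Finset.mem_insert_self _ _) (hA.not_reflTransGen_of_mem hi)).symm.trans
    (hA.inTreeRootedAt_iff_of_reflTransGen (.single hi)).symm

theorem IsMaxInForest.rehang_spec (hA : IsMaxInForest W A) (hw : 0 < W i c)
    (hxor : ¬(InTreeRootedAt A i j ↔ InTreeRootedAt A c j)) :
    (i, parent A i) ∈ A ∧ IsMaxInForest W (rehang A i c) ∧
      (InTreeRootedAt (rehang A i c) i j ↔ InTreeRootedAt A c j) ∧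
      (InTreeRootedAt (rehang A i c) (parent A i) j ↔ InTreeRootedAt A i j) := by
  have hnr : ¬ReflTransGen (arcRel A) c i := fun h =>
    hxor (hA.1.inTreeRootedAt_iff_of_reflTransGen h).symm
  have hci : c ≠ i := by
    rintro rfl
    exact hxor Iff.rfl
  have hi : (i, parent A i) ∈ A := by
    by_contra h
    refine hnr (hA.reflTransGen_of_root (fun e he hx => h (parent_mem (b := e.2) ?_)) hci.symm hw)
    rwa [← hx]
  have hA' : IsMaxInForest W (rehang A i c) :=
    hA.swapArc_of_not_reflTransGen hi (hA.1.root_erase hi) hci.symm hw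
      fun h => hnr (ReflTransGen.mono (fun _ _ => Finset.mem_of_mem_erase) _ _ h)
  refine ⟨hi, hA', ?_, hA.1.inTreeRootedAt_rehang_parent_iff hi⟩
  exact (hA'.1.inTreeRootedAt_iff_of_reflTransGen (.single (Finset.mem_insert_self _ _))).trans
    (inTreeRootedAt_iff_of_agree (fun _ _ hx => (mem_rehang_iff_of_ne hx).symm) hi
      (Finset.mem_insert_self _ _) hnr).symm

open scoped Classical in
noncomputable def maxInForests (W : Matrix (Fin n) (Fin n) ℝ) :
    Finset (Finset (Fin n × Fin n)) :=
  Finset.univ.filter (IsMaxInForest W)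

theorem mem_maxInForests : A ∈ maxInForests W ↔ IsMaxInForest W A := by
  simp [maxInForests]

theorem mem_filter_univ_product_maxInForests {P : Fin n × Finset (Fin n × Fin n) → Prop}
    [DecidablePred P] {p : Fin n × Finset (Fin n × Fin n)} :
    p ∈ (Finset.univ ×ˢ maxInForests W).filter P ↔ IsMaxInForest W p.2 ∧ P p := by
  simp [mem_maxInForests]

open scoped Classical in
theorem sum_rehang_eq_zero (i j : Fin n) :
    ∑ p ∈ (Finset.univ ×ˢ maxInForests W).filter
        (fun p => 0 < W i p.1 ∧ ¬(InTreeRootedAt p.2 i j ↔ InTreeRootedAt p.2 p.1 j)),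
      W i p.1 * ((if InTreeRootedAt p.2 i j then forestWeight W p.2 else 0) -
        (if InTreeRootedAt p.2 p.1 j then forestWeight W p.2 else 0)) = 0 := by
  refine Finset.sum_involution (fun p _ => (parent p.2 i, rehang p.2 i p.1))
    (fun ⟨c, A⟩ hp => ?_) (fun ⟨c, A⟩ hp _ => ?_) (fun ⟨c, A⟩ hp => ?_)
    (fun ⟨c, A⟩ hp => ?_)
  · obtain ⟨hA, hw, hxor⟩ := mem_filter_univ_product_maxInForests.mp hp
    obtain ⟨hi, hA', hself, hpar⟩ := hA.rehang_spec hw hxor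
    have hweight := hA.1.mul_forestWeight_rehang (c := c) hi
    simp only [hself, hpar]
    by_cases hij : InTreeRootedAt A i j
    · have hcj : ¬InTreeRootedAt A c j := fun hcj => hxor (iff_of_true hij hcj)
      simp only [hij, hcj, if_true, if_false]
      linear_combination -hweight
    · have hcj : InTreeRootedAt A c j := by_contra (hxor ∘ iff_of_false hij)
      simp only [hij, hcj, if_true, if_false]
      linear_combination hweight
  · obtain ⟨hA, hw, hxor⟩ := mem_filter_univ_product_maxInForests.mp hp
    obtain ⟨-, -, hself, -⟩ := hA.rehang_spec hw hxor
    intro h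
    rw [show rehang A i c = A from congrArg Prod.snd h] at hself
    exact hxor hself
  · obtain ⟨hA, hw, hxor⟩ := mem_filter_univ_product_maxInForests.mp hp
    obtain ⟨hi, hA', hself, hpar⟩ := hA.rehang_spec hw hxor
    refine mem_filter_univ_product_maxInForests.mpr ⟨hA', (hA.1.1 _ hi).2, ?_⟩
    rw [hself, hpar]
    exact fun h => hxor h.symm
  · obtain ⟨hA, hw, hxor⟩ := mem_filter_univ_product_maxInForests.mp hp
    obtain ⟨hi, hA', -, -⟩ := hA.rehang_spec hw hxor
    exact Prod.ext hA'.1.parent_rehang (hA.1.rehang_rehang hi hA'.1)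

theorem arcRel_erase_of_ne : ∀ a b, a ≠ e.1 → arcRel A a b → arcRel (A.erase e) a b :=
  fun _ _ ha hab => Finset.mem_erase_of_ne_of_mem (fun h => ha (congrArg Prod.fst h)) hab

theorem arcRel_swapArc_of_ne {f : Fin n × Fin n} :
    ∀ a b, a ≠ e.1 → arcRel A a b → arcRel (swapArc A e f) a b :=
  fun a b ha hab => Finset.mem_insert_of_mem (arcRel_erase_of_ne a b ha hab)

theorem reflTransGen_swapArc {r q : Fin n} (hxr : ReflTransGen (arcRel A) x r)
    (hqe : ReflTransGen (arcRel A) q e.1) :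
    ReflTransGen (arcRel (swapArc A e (r, q))) x e.1 := by
  by_cases hxe : ReflTransGen (arcRel A) x e.1
  · exact hxe.mono_upTo arcRel_swapArc_of_ne
  · have hxq : ReflTransGen (arcRel (swapArc A e (r, q))) x q :=
      (hxr.mono_avoiding arcRel_swapArc_of_ne hxe).tail (Finset.mem_insert_self _ _)
    exact hxq.trans (hqe.mono_upTo arcRel_swapArc_of_ne)

namespace IsMaxInForest

theorem swapArc_of_mem_root (hA : IsMaxInForest W A) (hj : ∀ e ∈ A, e.1 ≠ j)
    (huj : (u, j) ∈ A) (htu : ReflTransGen (arcRel A) t u) (htj : t ≠ j) (hw : 0 < W j t) :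
    IsMaxInForest W (swapArc A (u, j) (j, t)) := by
  refine hA.swapArc_of_not_reflTransGen huj (root_erase_of_root hj _) htj.symm hw fun htjB => ?_
  have htuB : ReflTransGen (arcRel (A.erase (u, j))) t u :=
    htu.mono_upTo (arcRel_erase_of_ne (e := (u, j)))
  have huj_ne : u ≠ j := (hA.1.1 _ huj).1
  rcases ReflTransGen.total_of_right_unique (hA.1.mono (A.erase_subset _)).rightUnique htuB htjB
    with h | h
  · exact huj_ne (eq_of_reflTransGen_of_root (hA.1.root_erase huj) h)
  · exact huj_ne (eq_of_reflTransGen_of_root (root_erase_of_root hj _) h).symm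

theorem swapArc_onto_root {N : Fin n} (hA : IsMaxInForest W A) (hk : ∀ e ∈ A, e.1 ≠ k)
    (hjN : (j, N) ∈ A) (hkj : k ≠ j) (hw : 0 < W k j) :
    IsMaxInForest W (swapArc A (j, N) (k, j)) :=
  hA.swapArc_of_not_reflTransGen hjN (root_erase_of_root hk _) hkj hw fun h =>
    hkj (eq_of_reflTransGen_of_root (hA.1.root_erase hjN) h).symm

theorem predOnPath_spec (hA : IsMaxInForest W A) (hij : InTreeRootedAt A i j) (htj : t ≠ j)
    (hw : 0 < W j t) :
    (predOnPath A t j, j) ∈ A ∧ IsMaxInForest W (swapArc A (predOnPath A t j, j) (j, t)) ∧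
      InTreeRootedAt (swapArc A (predOnPath A t j, j) (j, t)) i (predOnPath A t j) := by
  obtain ⟨hij, hj⟩ := hij
  obtain ⟨u, htu, huj⟩ : ∃ u, ReflTransGen (arcRel A) t u ∧ (u, j) ∈ A := by
    rcases (hA.reflTransGen_of_root hj htj.symm hw).cases_tail with h | h
    · exact absurd h.symm htj
    · exact h
  rw [hA.1.predOnPath_eq hj htu huj]
  exact ⟨huj, hA.swapArc_of_mem_root hj huj htu htj hw, reflTransGen_swapArc hij htu,
    root_swapArc (hA.1.root_erase huj) (hA.1.1 _ huj).1.symm⟩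

theorem parent_spec (hA : IsMaxInForest W A) (hik : InTreeRootedAt A i k) (hkj : k ≠ j)
    (hw : 0 < W k j) :
    (j, parent A j) ∈ A ∧ IsMaxInForest W (swapArc A (j, parent A j) (k, j)) ∧
      InTreeRootedAt (swapArc A (j, parent A j) (k, j)) i j ∧
      predOnPath (swapArc A (j, parent A j) (k, j)) (parent A j) j = k := by
  obtain ⟨hik, hk⟩ := hik
  obtain ⟨c, hjc, hck⟩ : ∃ c, (j, c) ∈ A ∧ ReflTransGen (arcRel A) c k := by
    rcases (hA.reflTransGen_of_root hk hkj hw).cases_head with h | h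
    · exact absurd h.symm hkj
    · exact h
  obtain rfl := hA.1.parent_eq hjc
  have hA' := hA.swapArc_onto_root hk hjc hkj hw
  have hj' : ∀ g ∈ swapArc A (j, parent A j) (k, j), g.1 ≠ j :=
    root_swapArc (hA.1.root_erase hjc) hkj
  exact ⟨hjc, hA', ⟨reflTransGen_swapArc hik .refl, hj'⟩, hA'.1.predOnPath_eq hj'
    (hck.mono_avoiding arcRel_swapArc_of_ne (hA.1.not_reflTransGen_of_mem hjc))
    (Finset.mem_insert_self _ _)⟩

end IsMaxInForest

open scoped Classical in
theorem sum_reroot (hdiag : ∀ i, W i i = 0) (i j : Fin n) :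
    ∑ p ∈ (Finset.univ ×ˢ maxInForests W).filter
        (fun p => InTreeRootedAt p.2 i j ∧ 0 < W j p.1), W j p.1 * forestWeight W p.2 =
      ∑ p ∈ (Finset.univ ×ˢ maxInForests W).filter
        (fun p => InTreeRootedAt p.2 i p.1 ∧ 0 < W p.1 j), W p.1 j * forestWeight W p.2 := by
  have hne : ∀ {a b}, 0 < W a b → a ≠ b := fun hw h => by
    rw [h, hdiag] at hw
    exact hw.false
  refine Finset.sum_nbij'
    (fun p => (predOnPath p.2 p.1 j, swapArc p.2 (predOnPath p.2 p.1 j, j) (j, p.1)))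
    (fun p => (parent p.2 j, swapArc p.2 (j, parent p.2 j) (p.1, j)))
    (fun ⟨t, A⟩ hp => ?_) (fun ⟨k, A⟩ hp => ?_) (fun ⟨t, A⟩ hp => ?_)
    (fun ⟨k, A⟩ hp => ?_) (fun ⟨t, A⟩ hp => ?_)
  · obtain ⟨hA, hij, hw⟩ := mem_filter_univ_product_maxInForests.mp hp
    obtain ⟨huj, hA', hiu⟩ := hA.predOnPath_spec hij (hne hw).symm hw
    exact mem_filter_univ_product_maxInForests.mpr ⟨hA', hiu, (hA.1.1 _ huj).2⟩
  · obtain ⟨hA, hik, hw⟩ := mem_filter_univ_product_maxInForests.mp hp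
    obtain ⟨hjN, hA', hij, -⟩ := hA.parent_spec hik (hne hw) hw
    exact mem_filter_univ_product_maxInForests.mpr ⟨hA', hij, (hA.1.1 _ hjN).2⟩
  · obtain ⟨hA, hij, hw⟩ := mem_filter_univ_product_maxInForests.mp hp
    obtain ⟨huj, hA', -⟩ := hA.predOnPath_spec hij (hne hw).symm hw
    have hpar := hA'.1.parent_eq (Finset.mem_insert_self _ _)
    refine Prod.ext hpar ?_
    simp only [hpar]
    exact swapArc_swapArc huj fun h => hij.2 (j, t) (Finset.mem_of_mem_erase h) rfl
  · obtain ⟨hA, hik, hw⟩ := mem_filter_univ_product_maxInForests.mp hp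
    obtain ⟨hjN, -, -, hpred⟩ := hA.parent_spec hik (hne hw) hw
    refine Prod.ext hpred ?_
    simp only [hpred]
    exact swapArc_swapArc hjN fun h => hik.2 (k, j) (Finset.mem_of_mem_erase h) rfl
  · obtain ⟨hA, hij, hw⟩ := mem_filter_univ_product_maxInForests.mp hp
    obtain ⟨huj, -, -⟩ := hA.predOnPath_spec hij (hne hw).symm hw
    exact (mul_forestWeight_swapArc huj fun h =>
      hij.2 (j, t) (Finset.mem_of_mem_erase h) rfl).symm

theorem lap_mul_apply (M : Matrix (Fin n) (Fin n) ℝ) (i j : Fin n) :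
    (lap W * M) i j = ∑ c, W i c * (M i j - M c j) := by
  rw [lap, Matrix.sub_mul, Matrix.sub_apply, Matrix.diagonal_mul, Matrix.mul_apply,
    Finset.sum_mul, ← Finset.sum_sub_distrib]
  simp only [mul_sub]

theorem mul_lap_apply (M : Matrix (Fin n) (Fin n) ℝ) (i j : Fin n) :
    (M * lap W) i j = ∑ t, W j t * M i j - ∑ k, W k j * M i k := by
  rw [lap, Matrix.mul_sub, Matrix.sub_apply, Matrix.mul_diagonal, Matrix.mul_apply,
    Finset.mul_sum]
  congr 1 <;> exact Finset.sum_congr rfl fun _ _ => mul_comm _ _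

open scoped Classical in
theorem forestMatrix_maxForestCard_apply (i j : Fin n) :
    forestMatrix W (maxForestCard W) i j =
      ∑ A ∈ maxInForests W, if InTreeRootedAt A i j then forestWeight W A else 0 := by
  rw [forestMatrix, Matrix.of_apply, ← Finset.sum_filter, maxInForests, Finset.filter_filter,
    Finset.powerset_univ]
  simp only [IsMaxInForest, and_assoc]

theorem sum_mul_sum_ite_eq_sum_filter {β : Type*} {g : Fin n → ℝ} (hg : ∀ a, 0 ≤ g a)
    {F : Finset β} (P : Fin n × β → Prop) [DecidablePred P] (w : β → ℝ) :
    ∑ a, g a * ∑ b ∈ F, (if P (a, b) then w b else 0) =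
      ∑ p ∈ (Finset.univ ×ˢ F).filter (fun p => P p ∧ 0 < g p.1), g p.1 * w p.2 := by
  rw [← Finset.filter_filter,
    Finset.sum_filter_of_ne (p := fun q : Fin n × β => 0 < g q.1) (f := fun q => g q.1 * w q.2)
      fun p _ h => (hg _).lt_of_ne (left_ne_zero_of_mul h).symm,
    Finset.sum_filter, Finset.sum_product]
  simp only [Finset.mul_sum, mul_ite, mul_zero]

theorem lap_mul_forestMatrix_maxForestCard (hW : ∀ i j, 0 ≤ W i j) :
    lap W * forestMatrix W (maxForestCard W) = 0 := by
  classical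
  ext i j
  rw [lap_mul_apply, Matrix.zero_apply, ← sum_rehang_eq_zero (W := W) i j]
  simp only [forestMatrix_maxForestCard_apply, ← Finset.sum_sub_distrib, Finset.mul_sum,
    ← Finset.sum_product']
  refine (Finset.sum_filter_of_ne fun ⟨c, A⟩ _ hne => ⟨?_, fun hiff => ?_⟩).symm
  · exact (hW i c).lt_of_ne (left_ne_zero_of_mul hne).symm
  · exact right_ne_zero_of_mul hne (by simp only [hiff, sub_self])

theorem forestMatrix_maxForestCard_mul_lap (hW : ∀ i j, 0 ≤ W i j) (hdiag : ∀ i, W i i = 0) :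
    forestMatrix W (maxForestCard W) * lap W = 0 := by
  classical
  ext i j
  rw [mul_lap_apply, Matrix.zero_apply, sub_eq_zero]
  simp only [forestMatrix_maxForestCard_apply]
  rw [sum_mul_sum_ite_eq_sum_filter (hW j) (fun p => InTreeRootedAt p.2 i j),
    sum_mul_sum_ite_eq_sum_filter (fun k => hW k j) (fun p => InTreeRootedAt p.2 i p.1)]
  exact sum_reroot hdiag i j

theorem lap_mul_Jtilde_general {n : ℕ} (W : Matrix (Fin n) (Fin n) ℝ)
    (hW : ∀ i j, 0 ≤ W i j) (hdiag : ∀ i, W i i = 0) :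
    lap W * Jtilde W = 0 ∧ Jtilde W * lap W = 0 := by
  refine ⟨?_, ?_⟩
  · rw [Jtilde, Matrix.mul_smul, lap_mul_forestMatrix_maxForestCard hW, smul_zero]
  · rw [Jtilde, Matrix.smul_mul, forestMatrix_maxForestCard_mul_lap hW hdiag, smul_zero]

/-- The normalized matrix of maximum in-forests annihilates the Laplacian on
both sides: `L J̃ = J̃ L = 0`. -/
theorem lap_mul_Jtilde {n : ℕ} (W : Matrix (Fin n) (Fin n) ℝ)
    (hn : 1 < n) (hW : ∀ i j, 0 ≤ W i j) (hdiag : ∀ i, W i i = 0) :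
    lap W * Jtilde W = 0 ∧ Jtilde W * lap W = 0 :=
  lap_mul_Jtilde_general W hW hdiag
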